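/- Let n ≥ 2, let A = [[a,b],[c,d]] satisfy c > a > d > 0 > b, let ε ∈ (0,1), and let x : ℕ → [0,1]ⁿ be the trajectory of the complete-graph imitation dynamics starting from an arbitrary initial vector x(0) ∈ [0,1]ⁿ, where x(t+1) is obtained from x(t) by the complete-graph imitation update with payoffs P_i(t) = Σ_{j≠i} u(x_i(t), x_j(t)). Then for every player i the sequence t ↦ x_i(t) is nonincreasing and bounded below by min_j x_j(0), and hence converges to a limit as t → ∞. -/
import Mathlib


/-- The pairwise payoff of a two-strategy game with payoff matrix
`A = [[a,b],[c,d]]`: `u x y = [x, 1-x]ᵀ A [y, 1-y]`. -/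
def pdPayoff (a b c d x y : ℝ) : ℝ :=
  a * x * y + b * x * (1 - y) + c * (1 - x) * y + d * (1 - x) * (1 - y)

/-- The total payoff to player `i` on the complete graph `Kₙ`:
`P_i = Σ_{j ≠ i} u(x_i, x_j)`. -/
noncomputable def completePayoff (n : ℕ) (a b c d : ℝ) (x : Fin n → ℝ) (i : Fin n) : ℝ :=
  ∑ j ∈ Finset.univ.erase i, pdPayoff a b c d (x i) (x j)

/-- One step of the complete-graph imitation update with step size `ε`:
`x_i ↦ x_i + ε·Σ_{j∈J_i} (P_j − P_i)(x_j − x_i) / Σ_{j∈J_i} (P_j − P_i)` where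
`J_i = {j : x_j < x_i}`; `x_i` is unchanged when `J_i` is empty. -/
noncomputable def imitationUpdate (n : ℕ) (a b c d ε : ℝ) (x : Fin n → ℝ) (i : Fin n) : ℝ :=
  if (Finset.univ.filter (fun j => x j < x i)).Nonempty then
    x i + ε * (∑ j ∈ Finset.univ.filter (fun j => x j < x i),
          (completePayoff n a b c d x j - completePayoff n a b c d x i) * (x j - x i)) /
        (∑ j ∈ Finset.univ.filter (fun j => x j < x i),
          (completePayoff n a b c d x j - completePayoff n a b c d x i))
  else x i

/-- If `y j < y i` and all strategies are in `[0,1]`, then player `j`'s total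
payoff strictly exceeds player `i`'s. -/
lemma payoff_diff_pos (n : ℕ) (a b c d : ℝ) (hca : c > a) (had : a > d)
    (hd : d > 0) (hb : (0 : ℝ) > b)
    (y : Fin n → ℝ) (hy : ∀ j, y j ∈ Set.Icc (0 : ℝ) 1) (i j : Fin n)
    (hij : y j < y i) :
    0 < completePayoff n a b c d y j - completePayoff n a b c d y i := by
  have hne : i ≠ j := by
    intro h; subst h; exact lt_irrefl _ hij
  have hi : i ∈ Finset.univ.erase j := Finset.mem_erase.mpr ⟨hne, Finset.mem_univ i⟩
  have hj : j ∈ Finset.univ.erase i := Finset.mem_erase.mpr ⟨hne.symm, Finset.mem_univ j⟩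
  unfold completePayoff
  rw [← Finset.sum_erase_add (Finset.univ.erase j) _ hi,
      ← Finset.sum_erase_add (Finset.univ.erase i) _ hj,
      Finset.erase_right_comm]
  have key : ∀ k, (pdPayoff a b c d (y j) (y k) - pdPayoff a b c d (y i) (y k)) =
      (y j - y i) * ((b - d) + (a + d - b - c) * y k) := by
    intro k; unfold pdPayoff; ring
  have hsum : 0 ≤ ∑ k ∈ (Finset.univ.erase j).erase i,
      (pdPayoff a b c d (y j) (y k) - pdPayoff a b c d (y i) (y k)) := by
    apply Finset.sum_nonneg
    intro k _
    rw [key k]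
    have hk := hy k
    have hfac : (b - d) + (a + d - b - c) * y k ≤ 0 := by nlinarith [hk.1, hk.2]
    nlinarith
  have hanti : 0 < pdPayoff a b c d (y j) (y i) - pdPayoff a b c d (y i) (y j) := by
    have : pdPayoff a b c d (y j) (y i) - pdPayoff a b c d (y i) (y j)
        = (b - c) * (y j - y i) := by unfold pdPayoff; ring
    rw [this]
    exact mul_pos_of_neg_of_neg (by linarith) (by linarith)
  calc (0:ℝ) < (∑ k ∈ (Finset.univ.erase j).erase i,
        (pdPayoff a b c d (y j) (y k) - pdPayoff a b c d (y i) (y k)))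
        + (pdPayoff a b c d (y j) (y i) - pdPayoff a b c d (y i) (y j)) := by linarith
    _ = _ := by
      rw [Finset.sum_sub_distrib,
        show ((Finset.univ.erase i).erase j) = ((Finset.univ.erase j).erase i) from
          Finset.erase_right_comm]
      ring

/-- One imitation step keeps strategies between the current minimum and the
current value. -/
lemma step_bounds (n : ℕ) (a b c d : ℝ) (hca : c > a) (had : a > d)
    (hd : d > 0) (hb : (0 : ℝ) > b) (ε : ℝ) (hε0 : 0 < ε) (hε1 : ε ≤ 1)
    (y : Fin n → ℝ) (hy : ∀ j, y j ∈ Set.Icc (0 : ℝ) 1)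
    (m : ℝ) (hm : ∀ j, m ≤ y j) (i : Fin n) :
    m ≤ imitationUpdate n a b c d ε y i ∧ imitationUpdate n a b c d ε y i ≤ y i := by
  unfold imitationUpdate
  split_ifs with h
  · set F := Finset.univ.filter (fun j => y j < y i) with hF
    set N := ∑ j ∈ F, (completePayoff n a b c d y j - completePayoff n a b c d y i) * (y j - y i) with hN
    set D := ∑ j ∈ F, (completePayoff n a b c d y j - completePayoff n a b c d y i) with hD
    have hPpos : ∀ j ∈ F, 0 < completePayoff n a b c d y j - completePayoff n a b c d y i := by
      intro j hjF
      have : y j < y i := (Finset.mem_filter.mp hjF).2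
      exact payoff_diff_pos n a b c d hca had hd hb y hy i j this
    have hDpos : 0 < D := Finset.sum_pos hPpos h
    have hNnonpos : N ≤ 0 := by
      apply Finset.sum_nonpos
      intro j hjF
      have h1 := hPpos j hjF
      have h2 : y j - y i ≤ 0 := by
        have : y j < y i := (Finset.mem_filter.mp hjF).2
        linarith
      exact mul_nonpos_of_nonneg_of_nonpos h1.le h2
    have hNlow : D * (m - y i) ≤ N := by
      rw [hD, Finset.sum_mul, hN]
      apply Finset.sum_le_sum
      intro j hjF
      exact mul_le_mul_of_nonneg_left (by linarith [hm j]) (hPpos j hjF).le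
    have hq : m - y i ≤ N / D := by
      rw [le_div_iff₀ hDpos]; linarith [hNlow]
    have hq0 : N / D ≤ 0 := div_nonpos_of_nonpos_of_nonneg hNnonpos hDpos.le
    have heq : ε * N / D = ε * (N / D) := by ring
    constructor
    · rw [heq]
      nlinarith [mul_le_mul_of_nonneg_left hq hε0.le]
    · rw [heq]
      nlinarith
  · exact ⟨hm i, le_refl _⟩

/-- Along any trajectory of the complete-graph imitation dynamics starting in
`[0,1]ⁿ`, each player's strategy sequence `t ↦ x_i(t)` is nonincreasing and
bounded below by `min_j x_j(0)`, hence converges to a limit as `t → ∞`. -/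
theorem imitation_trajectory_monotone_convergent
    (n : ℕ) (hn : 2 ≤ n)
    (a b c d : ℝ) (hca : c > a) (had : a > d) (hd : d > 0) (hb : (0 : ℝ) > b)
    (ε : ℝ) (hε : ε ∈ Set.Ioo (0 : ℝ) 1)
    (x : ℕ → Fin n → ℝ) (hx0 : ∀ i, x 0 i ∈ Set.Icc (0 : ℝ) 1)
    (hrec : ∀ t i, x (t + 1) i = imitationUpdate n a b c d ε (x t) i) :
    ∀ i : Fin n,
      Antitone (fun t => x t i) ∧
      (∀ t, Finset.univ.inf' (Finset.univ_nonempty_iff.mpr ⟨⟨0, by omega⟩⟩) (x 0) ≤ x t i) ∧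
      ∃ L : ℝ, Filter.Tendsto (fun t => x t i) Filter.atTop (nhds L) := by
  have hne : (Finset.univ : Finset (Fin n)).Nonempty :=
    Finset.univ_nonempty_iff.mpr ⟨⟨0, by omega⟩⟩
  set m : ℝ := Finset.univ.inf' hne (x 0) with hm
  have hm0 : 0 ≤ m := by
    apply Finset.le_inf'
    intro j _
    exact (hx0 j).1
  -- invariant: all coordinates in [m,1] ⊆ [0,1], decreasing steps
  have hinv : ∀ t, (∀ i, x t i ∈ Set.Icc (0 : ℝ) 1 ∧ m ≤ x t i) := by
    intro t
    induction t with
    | zero =>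
      intro i
      exact ⟨hx0 i, Finset.inf'_le _ (Finset.mem_univ i)⟩
    | succ t ih =>
      intro i
      have hstep := step_bounds n a b c d hca had hd hb ε hε.1 hε.2.le
        (x t) (fun j => (ih j).1) m (fun j => (ih j).2) i
      rw [← hrec t i] at hstep
      refine ⟨⟨le_trans hm0 hstep.1, le_trans hstep.2 (ih i).1.2⟩, hstep.1⟩
  have hdec : ∀ t i, x (t + 1) i ≤ x t i := by
    intro t i
    have hstep := step_bounds n a b c d hca had hd hb ε hε.1 hε.2.le
      (x t) (fun j => (hinv t j).1) m (fun j => (hinv t j).2) i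
    rw [← hrec t i] at hstep
    exact hstep.2
  intro i
  have hanti : Antitone (fun t => x t i) :=
    antitone_nat_of_succ_le (fun t => hdec t i)
  refine ⟨hanti, fun t => (hinv t i).2, ?_⟩
  refine ⟨⨅ t, x t i, ?_⟩
  apply tendsto_atTop_ciInf hanti
  exact ⟨m, fun r ⟨t, ht⟩ => ht ▸ (hinv t i).2⟩
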